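/- Let n ≥ 1 and f ∈ L¹(ℝⁿ). Then for every t ∈ ℝⁿ, lim_{R → ∞} B_R^{R²/2}[f](t) = ∫_{ℝⁿ} e^{2πi⟨t,ξ⟩} e^{-‖ξ‖²/2} f̂(ξ) dξ, and this limit equals (f * G)(t), where G(x) = (2π)^{n/2} e^{-2π²‖x‖²}. -/

import Mathlib

/-!
The weight `(1 - ‖ξ‖²/R²)₊^{R²/2}` is at most `e^{-‖ξ‖²/2}` (from `1 + x ≤ eˣ`) and tends to it
as `R → ∞`, while `f̂` is bounded by `‖f‖₁`; dominated convergence gives the limit. The limit is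
`∫ f̂ g` for the modulated Gaussian `g ξ = e^{2πi⟨t,ξ⟩} e^{-‖ξ‖²/2}`, which by self-adjointness of
the Fourier transform equals `∫ f ĝ`, and `ĝ x = G (t - x)`.
-/
open MeasureTheory Real Complex Filter
open scoped ENNReal RealInnerProductSpace

/-- Fourier transform `f̂(ξ) = ∫ e^{-2πi⟨x,ξ⟩} f(x) dx` on `ℝⁿ`. -/
noncomputable def fourierT (n : ℕ) (f : EuclideanSpace ℝ (Fin n) → ℂ)
    (ξ : EuclideanSpace ℝ (Fin n)) : ℂ :=
  ∫ x, Complex.exp (-(2 * Real.pi * ⟪x, ξ⟫ : ℝ) * Complex.I) * f x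

/-- Bochner–Riesz kernel `K_{R,α}(z) = ∫ e^{2πi⟨z,ξ⟩} (1-|ξ|²/R²)₊^α dξ`. -/
noncomputable def BRkernel (n : ℕ) (R α : ℝ) (z : EuclideanSpace ℝ (Fin n)) : ℂ :=
  ∫ ξ : EuclideanSpace ℝ (Fin n),
    Complex.exp ((2 * Real.pi * ⟪z, ξ⟫ : ℝ) * Complex.I) *
      (((max (1 - ‖ξ‖ ^ 2 / R ^ 2) 0) ^ α : ℝ) : ℂ)

/-- Bochner–Riesz operator `B_R^α[f](t) = ∫ e^{2πi⟨t,ξ⟩} (1-|ξ|²/R²)₊^α f̂(ξ) dξ`. -/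
noncomputable def BR (n : ℕ) (R α : ℝ) (f : EuclideanSpace ℝ (Fin n) → ℂ)
    (t : EuclideanSpace ℝ (Fin n)) : ℂ :=
  ∫ ξ : EuclideanSpace ℝ (Fin n),
    Complex.exp ((2 * Real.pi * ⟪t, ξ⟫ : ℝ) * Complex.I) *
      (((max (1 - ‖ξ‖ ^ 2 / R ^ 2) 0) ^ α : ℝ) : ℂ) * fourierT n f ξ

open scoped FourierTransform Topology

section
variable {V : Type*} [NormedAddCommGroup V] [InnerProductSpace ℝ V] [FiniteDimensional ℝ V]
  [MeasurableSpace V] [BorelSpace V]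

theorem fourier_exp_inner_mul_gaussian (t x : V) :
    𝓕 (fun ξ : V => cexp ((2 * π * ⟪t, ξ⟫ : ℝ) * I) * (rexp (-‖ξ‖ ^ 2 / 2) : ℂ)) x =
      (((2 * π) ^ ((Module.finrank ℝ V : ℝ) / 2) * rexp (-2 * π ^ 2 * ‖t - x‖ ^ 2) : ℝ) : ℂ) := by
  convert fourier_gaussian_innerProductSpace' (b := 1 / 2) (by norm_num) t x using 2
  · ext ξ
    rw [ofReal_exp, ← Complex.exp_add]
    push_cast
    ring_nf
  · push_cast
    rw [Complex.ofReal_cpow (by positivity)]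
    push_cast
    congr 1
    · congr 1; ring
    · congr 1; ring

theorem integrable_exp_inner_mul_gaussian (t : V) :
    Integrable (fun ξ : V => cexp ((2 * π * ⟪t, ξ⟫ : ℝ) * I) * (rexp (-‖ξ‖ ^ 2 / 2) : ℂ)) := by
  convert GaussianFourier.integrable_cexp_neg_mul_sq_norm_add (b := 1 / 2) (by norm_num)
    (2 * π * I) t using 2 with ξ
  rw [ofReal_exp, ← Complex.exp_add]
  push_cast
  ring_nf

theorem integrable_exp_neg_sq_norm_div_two :
    Integrable (fun ξ : V => rexp (-‖ξ‖ ^ 2 / 2)) := by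
  refine (integrable_exp_inner_mul_gaussian 0).norm.congr (ae_of_all _ fun ξ => ?_)
  simp only [norm_mul, norm_exp_ofReal_mul_I, one_mul, norm_real,
    Real.norm_of_nonneg (Real.exp_pos _).le]

theorem integral_exp_inner_mul_gaussian_mul_fourier {f : V → ℂ} (hf : Integrable f) (t : V) :
    ∫ ξ, cexp ((2 * π * ⟪t, ξ⟫ : ℝ) * I) * (rexp (-‖ξ‖ ^ 2 / 2) : ℂ) * 𝓕 f ξ =
      ∫ s, f (t - s) *
        (((2 * π) ^ ((Module.finrank ℝ V : ℝ) / 2) * rexp (-2 * π ^ 2 * ‖s‖ ^ 2) : ℝ) : ℂ) := by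
  set g := fun ξ : V => cexp ((2 * π * ⟪t, ξ⟫ : ℝ) * I) * (rexp (-‖ξ‖ ^ 2 / 2) : ℂ)
  have hself : ∫ ξ, 𝓕 f ξ * g ξ = ∫ x, f x * 𝓕 g x := by
    have h := VectorFourier.integral_fourierIntegral_smul_eq_flip (L := innerₗ V)
      Real.continuous_fourierChar continuous_inner hf (integrable_exp_inner_mul_gaussian t)
    rw [flip_innerₗ] at h
    exact h
  calc _ = ∫ ξ, 𝓕 f ξ * g ξ := by simp only [g, mul_comm]
    _ = ∫ x, f x * 𝓕 g x := hself
    _ = _ := by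
      simp only [g, fourier_exp_inner_mul_gaussian]
      rw [← integral_sub_left_eq_self _ volume t]
      simp only [sub_sub_cancel]

theorem tendsto_integral_exp_inner_mul_fourier_of_dominated {ι : Type*} {l : Filter ι}
    [l.IsCountablyGenerated] {f : V → ℂ} (hf : Integrable f) {φ : ι → V → ℝ} {ψ g : V → ℝ}
    (hφ_meas : ∀ᶠ i in l, AEStronglyMeasurable (φ i)) (hφ_le : ∀ᶠ i in l, ∀ ξ, |φ i ξ| ≤ g ξ)
    (hg : Integrable g) (hφ_lim : ∀ ξ, Tendsto (φ · ξ) l (𝓝 (ψ ξ))) (t : V) :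
    Tendsto (fun i => ∫ ξ, cexp ((2 * π * ⟪t, ξ⟫ : ℝ) * I) * (φ i ξ : ℂ) * 𝓕 f ξ) l
      (𝓝 (∫ ξ, cexp ((2 * π * ⟪t, ξ⟫ : ℝ) * I) * (ψ ξ : ℂ) * 𝓕 f ξ)) := by
  have hcont : Continuous (𝓕 f) :=
    VectorFourier.fourierIntegral_continuous Real.continuous_fourierChar
      (innerSL ℝ).continuous₂ hf
  refine tendsto_integral_filter_of_dominated_convergence (fun ξ => g ξ * ∫ x, ‖f x‖) ?_ ?_
    (hg.mul_const _) (ae_of_all _ fun ξ => ?_)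
  · filter_upwards [hφ_meas] with i hi
    exact ((Continuous.aestronglyMeasurable (by fun_prop)).mul
      (continuous_ofReal.comp_aestronglyMeasurable hi)).mul hcont.aestronglyMeasurable
  · filter_upwards [hφ_le] with i hi
    refine ae_of_all _ fun ξ => ?_
    rw [norm_mul, norm_mul, norm_exp_ofReal_mul_I, one_mul, norm_real, Real.norm_eq_abs]
    exact mul_le_mul (hi ξ) (VectorFourier.norm_fourierIntegral_le_integral_norm _ _ _ _ _)
      (norm_nonneg _) ((abs_nonneg _).trans (hi ξ))
  · exact (tendsto_const_nhds.mul ((continuous_ofReal.tendsto _).comp (hφ_lim ξ))).mul_const _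
end

theorem rpow_max_one_add_div_le_exp (x : ℝ) {c : ℝ} (hc : 0 < c) :
    max (1 + x / c) 0 ^ c ≤ rexp x := by
  calc max (1 + x / c) 0 ^ c ≤ rexp (x / c) ^ c := by
        refine Real.rpow_le_rpow (le_max_right _ _) (max_le ?_ (Real.exp_pos _).le) hc.le
        linarith [Real.add_one_le_exp (x / c)]
    _ = rexp x := by rw [← Real.exp_mul, div_mul_cancel₀ _ hc.ne']

theorem tendsto_rpow_max_one_add_div_exp (x : ℝ) :
    Tendsto (fun c => max (1 + x / c) 0 ^ c) atTop (𝓝 (rexp x)) := by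
  refine (tendsto_one_add_div_rpow_exp x).congr' ?_
  have hdiv : Tendsto (fun c : ℝ => x / c) atTop (𝓝 0) := tendsto_const_nhds.div_atTop tendsto_id
  filter_upwards [hdiv.eventually (lt_mem_nhds neg_one_lt_zero)] with c hc
  rw [max_eq_left (by linarith)]

theorem one_sub_div_sq_eq_one_add_div (a : ℝ) {R : ℝ} (hR : R ≠ 0) :
    1 - a / R ^ 2 = 1 + (-a / 2) / (R ^ 2 / 2) := by
  field_simp; ring

theorem rpow_max_one_sub_div_sq_le_exp (a : ℝ) {R : ℝ} (hR : R ≠ 0) :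
    max (1 - a / R ^ 2) 0 ^ (R ^ 2 / 2) ≤ rexp (-a / 2) := by
  rw [one_sub_div_sq_eq_one_add_div a hR]
  exact rpow_max_one_add_div_le_exp _ (by positivity)

theorem tendsto_rpow_max_one_sub_div_sq (a : ℝ) :
    Tendsto (fun R : ℝ => max (1 - a / R ^ 2) 0 ^ (R ^ 2 / 2)) atTop (𝓝 (rexp (-a / 2))) := by
  refine ((tendsto_rpow_max_one_add_div_exp (-a / 2)).comp
    ((tendsto_pow_atTop two_ne_zero).atTop_div_const two_pos)).congr' ?_
  filter_upwards [eventually_ne_atTop 0] with R hR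
  rw [Function.comp_apply, one_sub_div_sq_eq_one_add_div a hR]

theorem fourierT_eq_fourier (n : ℕ) (f : EuclideanSpace ℝ (Fin n) → ℂ) :
    fourierT n f = 𝓕 f := by
  ext ξ
  rw [Real.fourier_eq', fourierT]
  congr with x
  simp only [smul_eq_mul, neg_mul, ofReal_neg]

theorem bochnerRiesz_gaussian_limit_general (n : ℕ)
    (f : EuclideanSpace ℝ (Fin n) → ℂ) (hf : Integrable f)
    (t : EuclideanSpace ℝ (Fin n)) :
    Tendsto (fun R : ℝ => BR n R (R ^ 2 / 2) f t) atTop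
        (nhds (∫ ξ : EuclideanSpace ℝ (Fin n),
          Complex.exp ((2 * Real.pi * ⟪t, ξ⟫ : ℝ) * Complex.I) *
            Real.exp (-‖ξ‖ ^ 2 / 2) * fourierT n f ξ)) ∧
      (∫ ξ : EuclideanSpace ℝ (Fin n),
          Complex.exp ((2 * Real.pi * ⟪t, ξ⟫ : ℝ) * Complex.I) *
            Real.exp (-‖ξ‖ ^ 2 / 2) * fourierT n f ξ) =
        ∫ s, f (t - s) *
          (((2 * Real.pi) ^ ((n : ℝ) / 2) *
            Real.exp (-2 * Real.pi ^ 2 * ‖s‖ ^ 2) : ℝ) : ℂ) := by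
  have hconv := integral_exp_inner_mul_gaussian_mul_fourier hf t
  rw [finrank_euclideanSpace_fin] at hconv
  simp only [BR, fourierT_eq_fourier]
  refine ⟨tendsto_integral_exp_inner_mul_fourier_of_dominated hf ?_ ?_
    integrable_exp_neg_sq_norm_div_two (fun ξ => tendsto_rpow_max_one_sub_div_sq _) t, hconv⟩
  · exact Eventually.of_forall fun R => (by fun_prop : Measurable _).aestronglyMeasurable
  · filter_upwards [eventually_ne_atTop 0] with R hR ξ
    rw [abs_of_nonneg (by positivity)]
    exact rpow_max_one_sub_div_sq_le_exp _ hR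

/-- pointwise limit of `B_R^{R²/2}[f]` as `R → ∞` is the Gaussian
regularization `∫ e^{2πi⟨t,ξ⟩} e^{-‖ξ‖²/2} f̂(ξ) dξ = (f * G)(t)` with
`G(x) = (2π)^{n/2} e^{-2π²‖x‖²}`. -/
theorem bochnerRiesz_gaussian_limit (n : ℕ) (hn : 1 ≤ n)
    (f : EuclideanSpace ℝ (Fin n) → ℂ) (hf : Integrable f)
    (t : EuclideanSpace ℝ (Fin n)) :
    Tendsto (fun R : ℝ => BR n R (R ^ 2 / 2) f t) atTop
        (nhds (∫ ξ : EuclideanSpace ℝ (Fin n),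
          Complex.exp ((2 * Real.pi * ⟪t, ξ⟫ : ℝ) * Complex.I) *
            Real.exp (-‖ξ‖ ^ 2 / 2) * fourierT n f ξ)) ∧
      (∫ ξ : EuclideanSpace ℝ (Fin n),
          Complex.exp ((2 * Real.pi * ⟪t, ξ⟫ : ℝ) * Complex.I) *
            Real.exp (-‖ξ‖ ^ 2 / 2) * fourierT n f ξ) =
        ∫ s, f (t - s) *
          (((2 * Real.pi) ^ ((n : ℝ) / 2) *
            Real.exp (-2 * Real.pi ^ 2 * ‖s‖ ^ 2) : ℝ) : ℂ) :=
  bochnerRiesz_gaussian_limit_general n f hf t
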